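/- Let t₀ < t₁ be reals, let f, δf, λ : ℝ × ℝ → ℝ be smooth with λ compactly supported, and suppose δf(x,t₀) = 0 for all x ∈ ℝ. Let S be a finite set of pairs (d,p) of natural numbers with p ≥ 1 for every (d,p) ∈ S, and let α : S → ℝ. Define J(ε) = ∫_{t₀}^{t₁} ∫_ℝ λ(x,t) · ( ∂_t(f+εδf)(x,t) + Σ_{(d,p)∈S} α(d,p) · ∂_x^d((f+εδf)^p)(x,t) ) dx dt. Then J has derivative at ε = 0 equal to ∫_{t₀}^{t₁} ∫_ℝ δf(x,t) · ( −∂_t λ(x,t) + Σ_{(d,p)∈S} (−1)^d α(d,p) · p · f(x,t)^{p−1} · ∂_x^d λ(x,t) ) dx dt + ∫_ℝ λ(x,t₁) · δf(x,t₁) dx. -/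

import Mathlib

open MeasureTheory

noncomputable def pdx (F : ℝ × ℝ → ℝ) : ℝ × ℝ → ℝ := fun p => fderiv ℝ F p (1, 0)
noncomputable def pdt (F : ℝ × ℝ → ℝ) : ℝ × ℝ → ℝ := fun p => fderiv ℝ F p (0, 1)

lemma hasDerivAt_slice_x {F : ℝ × ℝ → ℝ} (hF : ContDiff ℝ (⊤ : ℕ∞) F) (x t : ℝ) :
    HasDerivAt (fun y => F (y, t)) (pdx F (x, t)) x := by
  have h1 : HasDerivAt (fun y : ℝ => (y, t)) ((1 : ℝ), (0 : ℝ)) x :=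
    (hasDerivAt_id x).prodMk (hasDerivAt_const x t)
  exact ((hF.differentiable (by simp) (x, t)).hasFDerivAt.comp_hasDerivAt x h1)

lemma hasDerivAt_slice_t {F : ℝ × ℝ → ℝ} (hF : ContDiff ℝ (⊤ : ℕ∞) F) (x t : ℝ) :
    HasDerivAt (fun s => F (x, s)) (pdt F (x, t)) t := by
  have h1 : HasDerivAt (fun s : ℝ => (x, s)) ((0 : ℝ), (1 : ℝ)) t :=
    (hasDerivAt_const t x).prodMk (hasDerivAt_id t)
  exact ((hF.differentiable (by simp) (x, t)).hasFDerivAt.comp_hasDerivAt t h1)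

lemma contDiff_pdx {F : ℝ × ℝ → ℝ} (hF : ContDiff ℝ (⊤ : ℕ∞) F) : ContDiff ℝ (⊤ : ℕ∞) (pdx F) :=
  (hF.fderiv_right (by exact_mod_cast le_rfl)).clm_apply contDiff_const

lemma contDiff_pdt {F : ℝ × ℝ → ℝ} (hF : ContDiff ℝ (⊤ : ℕ∞) F) : ContDiff ℝ (⊤ : ℕ∞) (pdt F) :=
  (hF.fderiv_right (by exact_mod_cast le_rfl)).clm_apply contDiff_const

lemma contDiff_pdx_iter {F : ℝ × ℝ → ℝ} (hF : ContDiff ℝ (⊤ : ℕ∞) F) (d : ℕ) :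
    ContDiff ℝ (⊤ : ℕ∞) (pdx^[d] F) := by
  induction d generalizing F with
  | zero => exact hF
  | succ n ih => rw [Function.iterate_succ']; exact contDiff_pdx (ih hF)

lemma contDiff_slice_x {F : ℝ × ℝ → ℝ} (hF : ContDiff ℝ (⊤ : ℕ∞) F) (t : ℝ) :
    ContDiff ℝ (⊤ : ℕ∞) (fun y => F (y, t)) :=
  hF.comp (contDiff_id.prodMk contDiff_const)

lemma iteratedDeriv_slice {F : ℝ × ℝ → ℝ} (hF : ContDiff ℝ (⊤ : ℕ∞) F) (d : ℕ) (x t : ℝ) :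
    iteratedDeriv d (fun y => F (y, t)) x = pdx^[d] F (x, t) := by
  induction d generalizing x with
  | zero => simp
  | succ n ih =>
    rw [iteratedDeriv_succ]
    have h : deriv (iteratedDeriv n fun y => F (y, t)) x
        = deriv (fun y => pdx^[n] F (y, t)) x := by
      apply Filter.EventuallyEq.deriv_eq
      exact Filter.Eventually.of_forall fun y => ih y
    rw [h, Function.iterate_succ']
    exact (hasDerivAt_slice_x (contDiff_pdx_iter hF n) x t).deriv

lemma hcs_pdx {F : ℝ × ℝ → ℝ} (hFs : HasCompactSupport F) : HasCompactSupport (pdx F) := by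
  have h := hFs.fderiv (𝕜 := ℝ)
  exact h.comp_left (g := fun L : ℝ × ℝ →L[ℝ] ℝ => L (1, 0)) rfl

lemma hcs_pdt {F : ℝ × ℝ → ℝ} (hFs : HasCompactSupport F) : HasCompactSupport (pdt F) := by
  have h := hFs.fderiv (𝕜 := ℝ)
  exact h.comp_left (g := fun L : ℝ × ℝ →L[ℝ] ℝ => L (0, 1)) rfl

lemma hcs_pdx_iter {F : ℝ × ℝ → ℝ} (hFs : HasCompactSupport F) (d : ℕ) :
    HasCompactSupport (pdx^[d] F) := by
  induction d generalizing F with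
  | zero => exact hFs
  | succ n ih => rw [Function.iterate_succ']; exact hcs_pdx (ih hFs)

lemma isClosedEmbedding_mk_right (t : ℝ) : Topology.IsClosedEmbedding (fun x : ℝ => (x, t)) :=
  Function.LeftInverse.isClosedEmbedding (f := Prod.fst) (fun x => rfl)
    continuous_fst (continuous_id.prodMk continuous_const)

lemma hcs_slice {F : ℝ × ℝ → ℝ} (hFs : HasCompactSupport F) (t : ℝ) :
    HasCompactSupport (fun x => F (x, t)) :=
  hFs.comp_isClosedEmbedding (isClosedEmbedding_mk_right t)

lemma integrable_slice {F : ℝ × ℝ → ℝ} (hF : Continuous F) (hFs : HasCompactSupport F) (t : ℝ) :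
    Integrable (fun x => F (x, t)) :=
  (hF.comp (continuous_id.prodMk continuous_const)).integrable_of_hasCompactSupport
    (hcs_slice hFs t)

lemma cont_param {F : ℝ × ℝ → ℝ} (hF : Continuous F) (hFs : HasCompactSupport F) :
    Continuous (fun t => ∫ x : ℝ, F (x, t)) := by
  obtain ⟨C, hC⟩ := hF.bounded_above_of_compact_support hFs
  set K : Set ℝ := Prod.fst '' (tsupport F) with hK
  have hKc : IsCompact K := hFs.image continuous_fst
  apply continuous_of_dominated (bound := K.indicator fun _ => C)
  · intro t
    exact ((hF.comp (continuous_id.prodMk continuous_const))).aestronglyMeasurable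
  · intro t
    filter_upwards with x
    by_cases hx : x ∈ K
    · rw [Set.indicator_of_mem hx]; exact hC (x, t)
    · rw [Set.indicator_of_notMem hx]
      have h0 : F (x, t) = 0 := by
        by_contra h
        exact hx ⟨(x, t), subset_tsupport _ h, rfl⟩
      simp [h0]
  · exact (integrableOn_const hKc.measure_lt_top.ne).integrable_indicator
      hKc.measurableSet
  · filter_upwards with x
    exact hF.comp (continuous_const.prodMk continuous_id)

lemma hcs_swap {F : ℝ × ℝ → ℝ} (hFs : HasCompactSupport F) :
    HasCompactSupport (F ∘ Prod.swap) :=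
  hFs.comp_homeomorph (Homeomorph.prodComm ℝ ℝ)

lemma swap_helper {F : ℝ × ℝ → ℝ} (hF : Continuous F) (hFs : HasCompactSupport F)
    {t₀ t₁ : ℝ} (h : t₀ ≤ t₁) :
    ∫ t in t₀..t₁, ∫ x : ℝ, F (x, t) = ∫ x : ℝ, ∫ t in t₀..t₁, F (x, t) := by
  rw [intervalIntegral.integral_of_le h]
  have h2 : ∀ x : ℝ, ∫ t in t₀..t₁, F (x, t) = ∫ t in Set.Ioc t₀ t₁, F (x, t) := fun x =>
    intervalIntegral.integral_of_le h
  simp_rw [h2]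
  exact integral_integral_swap_of_hasCompactSupport
    (f := fun t x => F (x, t)) (hF.comp continuous_swap) (hcs_swap hFs)

lemma contDiff_deriv_top {u : ℝ → ℝ} (hu : ContDiff ℝ (⊤ : ℕ∞) u) :
    ContDiff ℝ (⊤ : ℕ∞) (deriv u) := (contDiff_infty_iff_deriv.mp hu).2

lemma ibp_once {u v : ℝ → ℝ} (hu : ContDiff ℝ (⊤ : ℕ∞) u) (hus : HasCompactSupport u)
    (hv : ContDiff ℝ (⊤ : ℕ∞) v) :
    ∫ x : ℝ, u x * deriv v x = - ∫ x : ℝ, deriv u x * v x := by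
  have hud : ∀ x, HasDerivAt u (deriv u x) x := fun x =>
    (hu.differentiable (by simp) x).hasDerivAt
  have hvd : ∀ x, HasDerivAt v (deriv v x) x := fun x =>
    (hv.differentiable (by simp) x).hasDerivAt
  have hcu' : Continuous (deriv u) := (contDiff_deriv_top hu).continuous
  have hcv' : Continuous (deriv v) := (contDiff_deriv_top hv).continuous
  have h1 : Integrable (u * deriv v) :=
    (hu.continuous.mul hcv').integrable_of_hasCompactSupport (hus.mul_right)
  have h2 : Integrable (deriv u * v) :=
    (hcu'.mul hv.continuous).integrable_of_hasCompactSupport (hus.deriv.mul_right)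
  have h3 : Integrable (u * v) :=
    (hu.continuous.mul hv.continuous).integrable_of_hasCompactSupport (hus.mul_right)
  exact integral_mul_deriv_eq_deriv_mul_of_integrable (fun x _ => hud x) (fun x _ => hvd x) h1 h2 h3

lemma contDiff_iteratedDeriv_top {u : ℝ → ℝ} (hu : ContDiff ℝ (⊤ : ℕ∞) u) (n : ℕ) :
    ContDiff ℝ (⊤ : ℕ∞) (iteratedDeriv n u) := by
  induction n with
  | zero => simpa using hu
  | succ k ih => rw [iteratedDeriv_succ]; exact contDiff_deriv_top ih

lemma ibp_iter {u v : ℝ → ℝ} (hu : ContDiff ℝ (⊤ : ℕ∞) u) (hus : HasCompactSupport u)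
    (hv : ContDiff ℝ (⊤ : ℕ∞) v) (d : ℕ) :
    ∫ x : ℝ, u x * iteratedDeriv d v x = (-1 : ℝ) ^ d * ∫ x : ℝ, iteratedDeriv d u x * v x := by
  induction d generalizing u with
  | zero => simp
  | succ n ih =>
    have step : ∫ x : ℝ, u x * iteratedDeriv (n + 1) v x
        = - ∫ x : ℝ, deriv u x * iteratedDeriv n v x := by
      simp_rw [iteratedDeriv_succ]
      exact ibp_once hu hus (contDiff_iteratedDeriv_top hv n)
    rw [step, ih (contDiff_deriv_top hu) hus.deriv]
    rw [show iteratedDeriv n (deriv u) = iteratedDeriv (n + 1) u from (iteratedDeriv_succ' (n := n) (f := u)).symm]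
    ring

lemma pdt_mul {F G : ℝ × ℝ → ℝ} (hF : ContDiff ℝ (⊤ : ℕ∞) F) (hG : ContDiff ℝ (⊤ : ℕ∞) G)
    (z : ℝ × ℝ) :
    pdt (fun w => F w * G w) z = pdt F z * G z + F z * pdt G z := by
  have h := fderiv_fun_mul (𝕜 := ℝ) (hF.differentiable (by simp) z) (hG.differentiable (by simp) z)
  simp only [pdt, h, ContinuousLinearMap.add_apply, ContinuousLinearMap.coe_smul',
    Pi.smul_apply, smul_eq_mul]
  ring

lemma pdx_iter_sum {ι : Type*} (s : Finset ι) (c : ι → ℝ) (g : ι → ℝ × ℝ → ℝ)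
    (hg : ∀ i ∈ s, ContDiff ℝ (⊤ : ℕ∞) (g i)) (d : ℕ) (z : ℝ × ℝ) :
    pdx^[d] (fun w => ∑ i ∈ s, c i * g i w) z = ∑ i ∈ s, c i * pdx^[d] (g i) z := by
  induction d generalizing g z with
  | zero => simp
  | succ n ih =>
    rw [Function.iterate_succ_apply]
    have hstep : pdx (fun w => ∑ i ∈ s, c i * g i w) = fun w => ∑ i ∈ s, c i * pdx (g i) w := by
      funext w
      have hht : HasFDerivAt (fun w => ∑ i ∈ s, c i * g i w)
          (∑ i ∈ s, c i • fderiv ℝ (g i) w) w :=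
        HasFDerivAt.fun_sum (fun i hi =>
          (((hg i hi).differentiable (by simp) w).hasFDerivAt).const_mul (c i))
      simp only [pdx, hht.fderiv, ContinuousLinearMap.sum_apply, ContinuousLinearMap.coe_smul',
        Pi.smul_apply, smul_eq_mul]
    rw [hstep]
    exact ih (fun i => pdx (g i)) (fun i hi => contDiff_pdx (hg i hi)) z

lemma DI_cmul (t₀ t₁ c : ℝ) (F : ℝ × ℝ → ℝ) :
    ∫ t in t₀..t₁, ∫ x : ℝ, c * F (x, t) = c * ∫ t in t₀..t₁, ∫ x : ℝ, F (x, t) := by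
  simp_rw [MeasureTheory.integral_const_mul]
  exact intervalIntegral.integral_const_mul c _

lemma DI_neg (t₀ t₁ : ℝ) (F : ℝ × ℝ → ℝ) :
    ∫ t in t₀..t₁, ∫ x : ℝ, -F (x, t) = - ∫ t in t₀..t₁, ∫ x : ℝ, F (x, t) := by
  simp_rw [integral_neg]
  exact intervalIntegral.integral_neg

lemma DI_add (t₀ t₁ : ℝ) {F G : ℝ × ℝ → ℝ} (hFc : Continuous F) (hFs : HasCompactSupport F)
    (hGc : Continuous G) (hGs : HasCompactSupport G) :
    ∫ t in t₀..t₁, ∫ x : ℝ, (F (x, t) + G (x, t))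
      = (∫ t in t₀..t₁, ∫ x : ℝ, F (x, t)) + ∫ t in t₀..t₁, ∫ x : ℝ, G (x, t) := by
  have h1 : ∀ t : ℝ, ∫ x : ℝ, (F (x, t) + G (x, t))
      = (∫ x : ℝ, F (x, t)) + ∫ x : ℝ, G (x, t) := fun t =>
    integral_add (integrable_slice hFc hFs t) (integrable_slice hGc hGs t)
  simp_rw [h1]
  exact intervalIntegral.integral_add ((cont_param hFc hFs).intervalIntegrable _ _)
    ((cont_param hGc hGs).intervalIntegrable _ _)

lemma DI_sum (t₀ t₁ : ℝ) {ι : Type*} (s : Finset ι) (F : ι → ℝ × ℝ → ℝ)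
    (hc : ∀ i ∈ s, Continuous (F i)) (hs : ∀ i ∈ s, HasCompactSupport (F i)) :
    ∫ t in t₀..t₁, ∫ x : ℝ, ∑ i ∈ s, F i (x, t)
      = ∑ i ∈ s, ∫ t in t₀..t₁, ∫ x : ℝ, F i (x, t) := by
  have h1 : ∀ t : ℝ, ∫ x : ℝ, ∑ i ∈ s, F i (x, t) = ∑ i ∈ s, ∫ x : ℝ, F i (x, t) := fun t =>
    integral_finset_sum s (fun i hi => integrable_slice (hc i hi) (hs i hi) t)
  simp_rw [h1]
  exact intervalIntegral.integral_finset_sum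
    (fun i hi => ((cont_param (hc i hi) (hs i hi)).intervalIntegrable _ _))

lemma DI_congr (t₀ t₁ : ℝ) {F G : ℝ × ℝ → ℝ} (h : ∀ x t : ℝ, F (x, t) = G (x, t)) :
    ∫ t in t₀..t₁, ∫ x : ℝ, F (x, t) = ∫ t in t₀..t₁, ∫ x : ℝ, G (x, t) := by
  simp only [h]

lemma hcs_finset_sum {ι : Type*} (s : Finset ι) (F : ι → ℝ × ℝ → ℝ)
    (h : ∀ i ∈ s, HasCompactSupport (F i)) :
    HasCompactSupport (fun z => ∑ i ∈ s, F i z) := by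
  classical
  induction s using Finset.induction with
  | empty =>
    have : (fun _ : ℝ × ℝ => (0:ℝ)) = (0 : ℝ × ℝ → ℝ) := rfl
    simpa [HasCompactSupport, tsupport] using isCompact_empty
  | @insert a s ha ih =>
    have : (fun z => ∑ i ∈ insert a s, F i z) = fun z => F a z + ∑ i ∈ s, F i z := by
      funext z; rw [Finset.sum_insert ha]
    rw [this]
    exact (h a (Finset.mem_insert_self a s)).add
      (ih fun i hi => h i (Finset.mem_insert_of_mem hi))

/-- Gateaux derivative of the Lagrange-multiplier constraint term `J[f] = ∫ λ L[f]` of the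
cost functional, where `L[f] = ∂_t f + Σ α_{d,p} ∂_x^d(f^p)`. -/
theorem gateaux_derivative_constraint_term
    (t₀ t₁ : ℝ) (ht : t₀ < t₁) (f δf l : ℝ × ℝ → ℝ)
    (hf : ContDiff ℝ (⊤ : ℕ∞) f) (hδf : ContDiff ℝ (⊤ : ℕ∞) δf) (hl : ContDiff ℝ (⊤ : ℕ∞) l)
    (hlsupp : HasCompactSupport l)
    (hδf0 : ∀ x : ℝ, δf (x, t₀) = 0)
    (S : Finset (ℕ × ℕ)) (hS : ∀ q ∈ S, 1 ≤ q.2)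
    (α : {q : ℕ × ℕ // q ∈ S} → ℝ) :
    HasDerivAt (fun ε : ℝ => ∫ t in t₀..t₁, ∫ x : ℝ,
        l (x, t) * (deriv (fun s => f (x, s) + ε * δf (x, s)) t
          + ∑ q : {q : ℕ × ℕ // q ∈ S},
              α q * iteratedDeriv q.1.1 (fun x => (f (x, t) + ε * δf (x, t)) ^ q.1.2) x))
      ((∫ t in t₀..t₁, ∫ x : ℝ,
          δf (x, t) * (-(deriv (fun s => l (x, s)) t)
            + ∑ q : {q : ℕ × ℕ // q ∈ S},
                (-1 : ℝ) ^ q.1.1 * α q * q.1.2 * f (x, t) ^ (q.1.2 - 1)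
                  * iteratedDeriv q.1.1 (fun x => l (x, t)) x))
        + ∫ x : ℝ, l (x, t₁) * δf (x, t₁))
      0 := by
  have hf' : ContDiff ℝ (⊤ : ℕ∞) f := hf.of_le (by simp)
  have hδf' : ContDiff ℝ (⊤ : ℕ∞) δf := hδf.of_le (by simp)
  have hl' : ContDiff ℝ (⊤ : ℕ∞) l := hl.of_le (by simp)
  have hlc : Continuous l := hl'.continuous
  have hδfc : Continuous δf := hδf'.continuous
  -- smoothness of monomial plane functions
  have hgsm : ∀ (q : {q : ℕ × ℕ // q ∈ S}) (k : ℕ),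
      ContDiff ℝ (⊤ : ℕ∞) (fun z : ℝ × ℝ => f z ^ k * δf z ^ (q.1.2 - k)) :=
    fun q k => (hf'.pow k).mul (hδf'.pow _)
  have hWc : ∀ (q : {q : ℕ × ℕ // q ∈ S}) (k : ℕ),
      Continuous (pdx^[q.1.1] fun z : ℝ × ℝ => f z ^ k * δf z ^ (q.1.2 - k)) :=
    fun q k => (contDiff_pdx_iter (hgsm q k) _).continuous
  -- pointwise time-derivative
  have hpt1 : ∀ ε x t : ℝ, deriv (fun s => f (x, s) + ε * δf (x, s)) t
      = pdt f (x, t) + ε * pdt δf (x, t) := fun ε x t =>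
    ((hasDerivAt_slice_t hf' x t).add ((hasDerivAt_slice_t hδf' x t).const_mul ε)).deriv
  -- pointwise expansion of the iterated x-derivative
  have hpt2 : ∀ (q : {q : ℕ × ℕ // q ∈ S}) (ε t x : ℝ),
      iteratedDeriv q.1.1 (fun y => (f (y, t) + ε * δf (y, t)) ^ q.1.2) x
        = ∑ k ∈ Finset.range (q.1.2 + 1), ((q.1.2.choose k : ℝ) * ε ^ (q.1.2 - k))
            * pdx^[q.1.1] (fun z => f z ^ k * δf z ^ (q.1.2 - k)) (x, t) := by
    intro q ε t x
    have hGsm : ContDiff ℝ (⊤ : ℕ∞) (fun z : ℝ × ℝ => (f z + ε * δf z) ^ q.1.2) :=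
      (hf'.add (contDiff_const.mul hδf')).pow _
    have h1 : iteratedDeriv q.1.1 (fun y => (f (y, t) + ε * δf (y, t)) ^ q.1.2) x
        = pdx^[q.1.1] (fun z => (f z + ε * δf z) ^ q.1.2) (x, t) :=
      iteratedDeriv_slice hGsm _ x t
    rw [h1]
    have h2 : (fun z : ℝ × ℝ => (f z + ε * δf z) ^ q.1.2)
        = fun z => ∑ k ∈ Finset.range (q.1.2 + 1),
            ((q.1.2.choose k : ℝ) * ε ^ (q.1.2 - k)) * (f z ^ k * δf z ^ (q.1.2 - k)) := by
      funext z
      rw [add_pow]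
      exact Finset.sum_congr rfl fun k _ => by rw [mul_pow]; ring
    rw [h2, pdx_iter_sum _ _ _ (fun k _ => hgsm q k)]
  -- continuity / compact support of the building blocks
  have hlW_c : ∀ (q : {q : ℕ × ℕ // q ∈ S}) (k : ℕ),
      Continuous (fun z : ℝ × ℝ => l z * pdx^[q.1.1] (fun w => f w ^ k * δf w ^ (q.1.2 - k)) z) :=
    fun q k => hlc.mul (hWc q k)
  have hlW_s : ∀ (q : {q : ℕ × ℕ // q ∈ S}) (k : ℕ),
      HasCompactSupport
        (fun z : ℝ × ℝ => l z * pdx^[q.1.1] (fun w => f w ^ k * δf w ^ (q.1.2 - k)) z) :=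
    fun q k => hlsupp.mul_right
  -- the key polynomial formula in ε
  have key : ∀ ε : ℝ,
      (∫ t in t₀..t₁, ∫ x : ℝ,
        l (x, t) * (deriv (fun s => f (x, s) + ε * δf (x, s)) t
          + ∑ q : {q : ℕ × ℕ // q ∈ S},
              α q * iteratedDeriv q.1.1 (fun x => (f (x, t) + ε * δf (x, t)) ^ q.1.2) x))
      = (∫ t in t₀..t₁, ∫ x : ℝ, l (x, t) * pdt f (x, t))
        + (ε * (∫ t in t₀..t₁, ∫ x : ℝ, l (x, t) * pdt δf (x, t))
        + ∑ q : {q : ℕ × ℕ // q ∈ S}, α q * ∑ k ∈ Finset.range (q.1.2 + 1),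
            ((q.1.2.choose k : ℝ) * (∫ t in t₀..t₁, ∫ x : ℝ,
              l (x, t) * pdx^[q.1.1] (fun z => f z ^ k * δf z ^ (q.1.2 - k)) (x, t)))
              * ε ^ (q.1.2 - k)) := by
    intro ε
    -- pointwise rearrangement
    have hptfull : ∀ x t : ℝ,
        l (x, t) * (deriv (fun s => f (x, s) + ε * δf (x, s)) t
          + ∑ q : {q : ℕ × ℕ // q ∈ S},
              α q * iteratedDeriv q.1.1 (fun x => (f (x, t) + ε * δf (x, t)) ^ q.1.2) x)
        = l (x, t) * pdt f (x, t)
          + (ε * (l (x, t) * pdt δf (x, t))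
          + ∑ q : {q : ℕ × ℕ // q ∈ S}, α q * ∑ k ∈ Finset.range (q.1.2 + 1),
              ((q.1.2.choose k : ℝ) * ε ^ (q.1.2 - k))
                * (l (x, t) * pdx^[q.1.1] (fun z => f z ^ k * δf z ^ (q.1.2 - k)) (x, t))) := by
      intro x t
      rw [hpt1 ε x t]
      rw [show (∑ q : {q : ℕ × ℕ // q ∈ S},
            α q * iteratedDeriv q.1.1 (fun x => (f (x, t) + ε * δf (x, t)) ^ q.1.2) x)
          = ∑ q : {q : ℕ × ℕ // q ∈ S}, α q * ∑ k ∈ Finset.range (q.1.2 + 1),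
              ((q.1.2.choose k : ℝ) * ε ^ (q.1.2 - k))
                * pdx^[q.1.1] (fun z => f z ^ k * δf z ^ (q.1.2 - k)) (x, t)
          from Finset.sum_congr rfl fun q _ => by rw [hpt2 q ε t x]]
      rw [mul_add, mul_add, Finset.mul_sum, add_assoc]
      congr 1
      congr 1
      · ring
      · refine Finset.sum_congr rfl fun q _ => ?_
        calc l (x, t) * (α q * ∑ k ∈ Finset.range (q.1.2 + 1),
              ((q.1.2.choose k : ℝ) * ε ^ (q.1.2 - k))
                * pdx^[q.1.1] (fun z => f z ^ k * δf z ^ (q.1.2 - k)) (x, t))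
            = α q * (l (x, t) * ∑ k ∈ Finset.range (q.1.2 + 1),
              ((q.1.2.choose k : ℝ) * ε ^ (q.1.2 - k))
                * pdx^[q.1.1] (fun z => f z ^ k * δf z ^ (q.1.2 - k)) (x, t)) := by ring
          _ = α q * ∑ k ∈ Finset.range (q.1.2 + 1),
              ((q.1.2.choose k : ℝ) * ε ^ (q.1.2 - k))
                * (l (x, t) * pdx^[q.1.1] (fun z => f z ^ k * δf z ^ (q.1.2 - k)) (x, t)) := by
            rw [Finset.mul_sum]
            congr 1
            exact Finset.sum_congr rfl fun k _ => by ring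
    simp only [hptfull]
    have hc1 : Continuous (fun z : ℝ × ℝ => l z * pdt f z) :=
      hlc.mul (contDiff_pdt hf').continuous
    have hs1 : HasCompactSupport (fun z : ℝ × ℝ => l z * pdt f z) := hlsupp.mul_right
    have hc2 : Continuous (fun z : ℝ × ℝ => l z * pdt δf z) :=
      hlc.mul (contDiff_pdt hδf').continuous
    have hs2 : HasCompactSupport (fun z : ℝ × ℝ => l z * pdt δf z) := hlsupp.mul_right
    have hcq : ∀ q : {q : ℕ × ℕ // q ∈ S}, Continuous (fun z : ℝ × ℝ =>
        α q * ∑ k ∈ Finset.range (q.1.2 + 1), ((q.1.2.choose k : ℝ) * ε ^ (q.1.2 - k)) * (l z * pdx^[q.1.1] (fun z => f z ^ k * δf z ^ (q.1.2 - k)) z)) :=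
      fun q => continuous_const.mul (continuous_finset_sum _ fun k _ =>
        continuous_const.mul (hlW_c q k))
    have hsq : ∀ q : {q : ℕ × ℕ // q ∈ S}, HasCompactSupport (fun z : ℝ × ℝ =>
        α q * ∑ k ∈ Finset.range (q.1.2 + 1), ((q.1.2.choose k : ℝ) * ε ^ (q.1.2 - k)) * (l z * pdx^[q.1.1] (fun z => f z ^ k * δf z ^ (q.1.2 - k)) z)) :=
      fun q => HasCompactSupport.mul_left
        (hcs_finset_sum _ _ fun k _ => HasCompactSupport.mul_left (hlW_s q k))
    have hcsum : Continuous (fun z : ℝ × ℝ => ∑ q : {q : ℕ × ℕ // q ∈ S},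
        α q * ∑ k ∈ Finset.range (q.1.2 + 1), ((q.1.2.choose k : ℝ) * ε ^ (q.1.2 - k)) * (l z * pdx^[q.1.1] (fun z => f z ^ k * δf z ^ (q.1.2 - k)) z)) :=
      continuous_finset_sum _ fun q _ => hcq q
    have hssum : HasCompactSupport (fun z : ℝ × ℝ => ∑ q : {q : ℕ × ℕ // q ∈ S},
        α q * ∑ k ∈ Finset.range (q.1.2 + 1), ((q.1.2.choose k : ℝ) * ε ^ (q.1.2 - k)) * (l z * pdx^[q.1.1] (fun z => f z ^ k * δf z ^ (q.1.2 - k)) z)) :=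
      hcs_finset_sum _ _ fun q _ => hsq q
    have hcG : Continuous (fun z : ℝ × ℝ => ε * (l z * pdt δf z)
        + ∑ q : {q : ℕ × ℕ // q ∈ S},
            α q * ∑ k ∈ Finset.range (q.1.2 + 1), ((q.1.2.choose k : ℝ) * ε ^ (q.1.2 - k)) * (l z * pdx^[q.1.1] (fun z => f z ^ k * δf z ^ (q.1.2 - k)) z)) :=
      (continuous_const.mul hc2).add hcsum
    have hsG : HasCompactSupport (fun z : ℝ × ℝ => ε * (l z * pdt δf z)
        + ∑ q : {q : ℕ × ℕ // q ∈ S},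
            α q * ∑ k ∈ Finset.range (q.1.2 + 1), ((q.1.2.choose k : ℝ) * ε ^ (q.1.2 - k)) * (l z * pdx^[q.1.1] (fun z => f z ^ k * δf z ^ (q.1.2 - k)) z)) :=
      (hs2.mul_left).add hssum
    have eA : (∫ t in t₀..t₁, ∫ x : ℝ,
          (l (x, t) * pdt f (x, t) + (ε * (l (x, t) * pdt δf (x, t)) + ∑ q : {q : ℕ × ℕ // q ∈ S}, α q * (∑ k ∈ Finset.range (q.1.2 + 1), ((q.1.2.choose k : ℝ) * ε ^ (q.1.2 - k)) * (l (x, t) * pdx^[q.1.1] (fun z => f z ^ k * δf z ^ (q.1.2 - k)) (x, t))))))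
        = (∫ t in t₀..t₁, ∫ x : ℝ, l (x, t) * pdt f (x, t)) + ∫ t in t₀..t₁, ∫ x : ℝ, (ε * (l (x, t) * pdt δf (x, t)) + ∑ q : {q : ℕ × ℕ // q ∈ S}, α q * (∑ k ∈ Finset.range (q.1.2 + 1), ((q.1.2.choose k : ℝ) * ε ^ (q.1.2 - k)) * (l (x, t) * pdx^[q.1.1] (fun z => f z ^ k * δf z ^ (q.1.2 - k)) (x, t)))) :=
      DI_add t₀ t₁ hc1 hs1 hcG hsG
    have eB : (∫ t in t₀..t₁, ∫ x : ℝ, (ε * (l (x, t) * pdt δf (x, t)) + ∑ q : {q : ℕ × ℕ // q ∈ S}, α q * (∑ k ∈ Finset.range (q.1.2 + 1), ((q.1.2.choose k : ℝ) * ε ^ (q.1.2 - k)) * (l (x, t) * pdx^[q.1.1] (fun z => f z ^ k * δf z ^ (q.1.2 - k)) (x, t)))))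
        = (∫ t in t₀..t₁, ∫ x : ℝ, ε * (l (x, t) * pdt δf (x, t))) + ∫ t in t₀..t₁, ∫ x : ℝ, ∑ q : {q : ℕ × ℕ // q ∈ S}, α q * (∑ k ∈ Finset.range (q.1.2 + 1), ((q.1.2.choose k : ℝ) * ε ^ (q.1.2 - k)) * (l (x, t) * pdx^[q.1.1] (fun z => f z ^ k * δf z ^ (q.1.2 - k)) (x, t))) :=
      DI_add t₀ t₁ (continuous_const.mul hc2) hs2.mul_left hcsum hssum
    have eC : (∫ t in t₀..t₁, ∫ x : ℝ, ε * (l (x, t) * pdt δf (x, t))) = ε * (∫ t in t₀..t₁, ∫ x : ℝ, l (x, t) * pdt δf (x, t)) :=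
      DI_cmul t₀ t₁ ε (fun z => l z * pdt δf z)
    have eD : (∫ t in t₀..t₁, ∫ x : ℝ, ∑ q : {q : ℕ × ℕ // q ∈ S}, α q * (∑ k ∈ Finset.range (q.1.2 + 1), ((q.1.2.choose k : ℝ) * ε ^ (q.1.2 - k)) * (l (x, t) * pdx^[q.1.1] (fun z => f z ^ k * δf z ^ (q.1.2 - k)) (x, t))))
        = ∑ q : {q : ℕ × ℕ // q ∈ S}, ∫ t in t₀..t₁, ∫ x : ℝ, α q * (∑ k ∈ Finset.range (q.1.2 + 1), ((q.1.2.choose k : ℝ) * ε ^ (q.1.2 - k)) * (l (x, t) * pdx^[q.1.1] (fun z => f z ^ k * δf z ^ (q.1.2 - k)) (x, t))) :=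
      DI_sum t₀ t₁ Finset.univ _ (fun q _ => hcq q) (fun q _ => hsq q)
    have eq_q : ∀ q : {q : ℕ × ℕ // q ∈ S},
        (∫ t in t₀..t₁, ∫ x : ℝ, α q * (∑ k ∈ Finset.range (q.1.2 + 1), ((q.1.2.choose k : ℝ) * ε ^ (q.1.2 - k)) * (l (x, t) * pdx^[q.1.1] (fun z => f z ^ k * δf z ^ (q.1.2 - k)) (x, t)))) = α q * (∑ k ∈ Finset.range (q.1.2 + 1), ((q.1.2.choose k : ℝ) * (∫ t in t₀..t₁, ∫ x : ℝ, l (x, t) * pdx^[q.1.1] (fun z => f z ^ k * δf z ^ (q.1.2 - k)) (x, t))) * ε ^ (q.1.2 - k)) := by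
      intro q
      have h1 : (∫ t in t₀..t₁, ∫ x : ℝ, (∑ k ∈ Finset.range (q.1.2 + 1), ((q.1.2.choose k : ℝ) * ε ^ (q.1.2 - k)) * (l (x, t) * pdx^[q.1.1] (fun z => f z ^ k * δf z ^ (q.1.2 - k)) (x, t))))
          = ∑ k ∈ Finset.range (q.1.2 + 1), ∫ t in t₀..t₁, ∫ x : ℝ,
              ((q.1.2.choose k : ℝ) * ε ^ (q.1.2 - k)) * (l (x, t) * pdx^[q.1.1] (fun z => f z ^ k * δf z ^ (q.1.2 - k)) (x, t)) :=
        DI_sum t₀ t₁ _ _ (fun k _ => continuous_const.mul (hlW_c q k))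
          (fun k _ => HasCompactSupport.mul_left (hlW_s q k))
      have h2 : ∀ k, (∫ t in t₀..t₁, ∫ x : ℝ, ((q.1.2.choose k : ℝ) * ε ^ (q.1.2 - k)) * (l (x, t) * pdx^[q.1.1] (fun z => f z ^ k * δf z ^ (q.1.2 - k)) (x, t)))
          = ((q.1.2.choose k : ℝ) * ε ^ (q.1.2 - k)) * (∫ t in t₀..t₁, ∫ x : ℝ, l (x, t) * pdx^[q.1.1] (fun z => f z ^ k * δf z ^ (q.1.2 - k)) (x, t)) := fun k =>
        DI_cmul t₀ t₁ _ (fun z => l z * pdx^[q.1.1] (fun w => f w ^ k * δf w ^ (q.1.2 - k)) z)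
      calc (∫ t in t₀..t₁, ∫ x : ℝ, α q * (∑ k ∈ Finset.range (q.1.2 + 1), ((q.1.2.choose k : ℝ) * ε ^ (q.1.2 - k)) * (l (x, t) * pdx^[q.1.1] (fun z => f z ^ k * δf z ^ (q.1.2 - k)) (x, t))))
          = α q * ∫ t in t₀..t₁, ∫ x : ℝ, (∑ k ∈ Finset.range (q.1.2 + 1), ((q.1.2.choose k : ℝ) * ε ^ (q.1.2 - k)) * (l (x, t) * pdx^[q.1.1] (fun z => f z ^ k * δf z ^ (q.1.2 - k)) (x, t))) :=
          DI_cmul t₀ t₁ (α q) (fun z => ∑ k ∈ Finset.range (q.1.2 + 1), ((q.1.2.choose k : ℝ) * ε ^ (q.1.2 - k)) * (l z * pdx^[q.1.1] (fun w => f w ^ k * δf w ^ (q.1.2 - k)) z))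
        _ = α q * ∑ k ∈ Finset.range (q.1.2 + 1), ((q.1.2.choose k : ℝ) * ε ^ (q.1.2 - k)) * (∫ t in t₀..t₁, ∫ x : ℝ, l (x, t) * pdx^[q.1.1] (fun z => f z ^ k * δf z ^ (q.1.2 - k)) (x, t)) := by
            rw [h1]
            exact congrArg _ (Finset.sum_congr rfl fun k _ => h2 k)
        _ = α q * (∑ k ∈ Finset.range (q.1.2 + 1), ((q.1.2.choose k : ℝ) * (∫ t in t₀..t₁, ∫ x : ℝ, l (x, t) * pdx^[q.1.1] (fun z => f z ^ k * δf z ^ (q.1.2 - k)) (x, t))) * ε ^ (q.1.2 - k)) :=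
            congrArg _ (Finset.sum_congr rfl fun k _ => by ring)
    rw [eA, eB, eC, eD]
    congr 1
    congr 1
    exact Finset.sum_congr rfl fun q _ => eq_q q
  simp only [key]
  have hD : HasDerivAt (fun ε : ℝ => (∫ t in t₀..t₁, ∫ x : ℝ, l (x, t) * pdt f (x, t))
        + (ε * (∫ t in t₀..t₁, ∫ x : ℝ, l (x, t) * pdt δf (x, t))
        + ∑ q : {q : ℕ × ℕ // q ∈ S}, α q * ∑ k ∈ Finset.range (q.1.2 + 1),
            ((q.1.2.choose k : ℝ) * (∫ t in t₀..t₁, ∫ x : ℝ, l (x, t) * pdx^[q.1.1] (fun z => f z ^ k * δf z ^ (q.1.2 - k)) (x, t))) * ε ^ (q.1.2 - k))) (0 + (1 * (∫ t in t₀..t₁, ∫ x : ℝ, l (x, t) * pdt δf (x, t))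
        + ∑ q : {q : ℕ × ℕ // q ∈ S}, α q * ∑ k ∈ Finset.range (q.1.2 + 1),
            ((q.1.2.choose k : ℝ) * (∫ t in t₀..t₁, ∫ x : ℝ, l (x, t) * pdx^[q.1.1] (fun z => f z ^ k * δf z ^ (q.1.2 - k)) (x, t)))
              * ((((q.1.2 - k : ℕ)) : ℝ) * (0:ℝ) ^ (q.1.2 - k - 1)))) 0 := by
    apply HasDerivAt.add
    · exact hasDerivAt_const 0 _
    · apply HasDerivAt.add
      · exact (hasDerivAt_id 0).mul_const _
      · exact HasDerivAt.fun_sum fun q _ => HasDerivAt.const_mul (α q)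
          (HasDerivAt.fun_sum fun k _ => HasDerivAt.const_mul _ (hasDerivAt_pow _ 0))
  convert hD using 1
  -- pointwise rewriting of the stated derivative value
  have hpt3 : ∀ x t : ℝ, deriv (fun s => l (x, s)) t = pdt l (x, t) := fun x t =>
    (hasDerivAt_slice_t hl' x t).deriv
  have hpt4 : ∀ (q : {q : ℕ × ℕ // q ∈ S}) (x t : ℝ),
      iteratedDeriv q.1.1 (fun x => l (x, t)) x = pdx^[q.1.1] l (x, t) := fun q x t =>
    iteratedDeriv_slice hl' _ x t
  have hptR : ∀ x t : ℝ,
      δf (x, t) * (-(deriv (fun s => l (x, s)) t)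
        + ∑ q : {q : ℕ × ℕ // q ∈ S}, (-1 : ℝ) ^ q.1.1 * α q * q.1.2 * f (x, t) ^ (q.1.2 - 1)
            * iteratedDeriv q.1.1 (fun x => l (x, t)) x)
      = δf (x, t) * -(pdt l (x, t))
        + ∑ q : {q : ℕ × ℕ // q ∈ S}, ((-1 : ℝ) ^ q.1.1 * α q * q.1.2) * (pdx^[q.1.1] l (x, t) * (f (x, t) ^ (q.1.2 - 1) * δf (x, t))) := by
    intro x t
    rw [hpt3 x t, show (∑ q : {q : ℕ × ℕ // q ∈ S}, (-1 : ℝ) ^ q.1.1 * α q * q.1.2 * f (x, t) ^ (q.1.2 - 1)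
            * iteratedDeriv q.1.1 (fun x => l (x, t)) x)
        = ∑ q : {q : ℕ × ℕ // q ∈ S}, (-1 : ℝ) ^ q.1.1 * α q * q.1.2 * f (x, t) ^ (q.1.2 - 1)
            * pdx^[q.1.1] l (x, t)
        from Finset.sum_congr rfl fun q _ => by rw [hpt4 q x t]]
    rw [mul_add, Finset.mul_sum]
    congr 1
    exact Finset.sum_congr rfl fun q _ => by ring
  have hc3 : Continuous (fun z : ℝ × ℝ => δf z * -(pdt l z)) :=
    hδfc.mul (contDiff_pdt hl').continuous.neg
  have hs3 : HasCompactSupport (fun z : ℝ × ℝ => δf z * -(pdt l z)) :=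
    HasCompactSupport.mul_left
      ((hcs_pdt hlsupp).comp_left (g := Neg.neg) neg_zero)
  have hcq2 : ∀ q : {q : ℕ × ℕ // q ∈ S}, Continuous (fun z : ℝ × ℝ => ((-1 : ℝ) ^ q.1.1 * α q * q.1.2) * (pdx^[q.1.1] l z * (f z ^ (q.1.2 - 1) * δf z))) := fun q =>
    continuous_const.mul ((contDiff_pdx_iter hl' _).continuous.mul
      ((hf'.pow _).continuous.mul hδfc))
  have hsq2 : ∀ q : {q : ℕ × ℕ // q ∈ S}, HasCompactSupport (fun z : ℝ × ℝ => ((-1 : ℝ) ^ q.1.1 * α q * q.1.2) * (pdx^[q.1.1] l z * (f z ^ (q.1.2 - 1) * δf z))) := fun q =>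
    ((hcs_pdx_iter hlsupp _).mul_right).mul_left
  have hcsum2 : Continuous (fun z : ℝ × ℝ => ∑ q : {q : ℕ × ℕ // q ∈ S}, ((-1 : ℝ) ^ q.1.1 * α q * q.1.2) * (pdx^[q.1.1] l z * (f z ^ (q.1.2 - 1) * δf z))) :=
    continuous_finset_sum _ fun q _ => hcq2 q
  have hssum2 : HasCompactSupport (fun z : ℝ × ℝ => ∑ q : {q : ℕ × ℕ // q ∈ S}, ((-1 : ℝ) ^ q.1.1 * α q * q.1.2) * (pdx^[q.1.1] l z * (f z ^ (q.1.2 - 1) * δf z))) :=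
    hcs_finset_sum _ _ fun q _ => hsq2 q
  have eRa : (∫ t in t₀..t₁, ∫ x : ℝ,
        δf (x, t) * (-(deriv (fun s => l (x, s)) t)
          + ∑ q : {q : ℕ × ℕ // q ∈ S}, (-1 : ℝ) ^ q.1.1 * α q * q.1.2 * f (x, t) ^ (q.1.2 - 1)
              * iteratedDeriv q.1.1 (fun x => l (x, t)) x))
      = ∫ t in t₀..t₁, ∫ x : ℝ,
          (δf (x, t) * -(pdt l (x, t)) + ∑ q : {q : ℕ × ℕ // q ∈ S}, ((-1 : ℝ) ^ q.1.1 * α q * q.1.2) * (pdx^[q.1.1] l (x, t) * (f (x, t) ^ (q.1.2 - 1) * δf (x, t)))) :=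
    DI_congr t₀ t₁
      (F := fun z : ℝ × ℝ => δf z * (-(deriv (fun s => l (z.1, s)) z.2)
        + ∑ q : {q : ℕ × ℕ // q ∈ S}, (-1 : ℝ) ^ q.1.1 * α q * q.1.2 * f z ^ (q.1.2 - 1)
            * iteratedDeriv q.1.1 (fun x => l (x, z.2)) z.1))
      (G := fun z : ℝ × ℝ => δf z * -(pdt l z)
        + ∑ q : {q : ℕ × ℕ // q ∈ S}, ((-1 : ℝ) ^ q.1.1 * α q * q.1.2)
            * (pdx^[q.1.1] l z * (f z ^ (q.1.2 - 1) * δf z)))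
      hptR
  have eRb : (∫ t in t₀..t₁, ∫ x : ℝ,
        (δf (x, t) * -(pdt l (x, t)) + ∑ q : {q : ℕ × ℕ // q ∈ S}, ((-1 : ℝ) ^ q.1.1 * α q * q.1.2) * (pdx^[q.1.1] l (x, t) * (f (x, t) ^ (q.1.2 - 1) * δf (x, t)))))
      = (∫ t in t₀..t₁, ∫ x : ℝ, δf (x, t) * -(pdt l (x, t))) + ∫ t in t₀..t₁, ∫ x : ℝ, ∑ q : {q : ℕ × ℕ // q ∈ S}, ((-1 : ℝ) ^ q.1.1 * α q * q.1.2) * (pdx^[q.1.1] l (x, t) * (f (x, t) ^ (q.1.2 - 1) * δf (x, t))) :=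
    DI_add t₀ t₁ hc3 hs3 hcsum2 hssum2
  have eRc : (∫ t in t₀..t₁, ∫ x : ℝ, ∑ q : {q : ℕ × ℕ // q ∈ S}, ((-1 : ℝ) ^ q.1.1 * α q * q.1.2) * (pdx^[q.1.1] l (x, t) * (f (x, t) ^ (q.1.2 - 1) * δf (x, t))))
      = ∑ q : {q : ℕ × ℕ // q ∈ S}, ∫ t in t₀..t₁, ∫ x : ℝ, ((-1 : ℝ) ^ q.1.1 * α q * q.1.2) * (pdx^[q.1.1] l (x, t) * (f (x, t) ^ (q.1.2 - 1) * δf (x, t))) :=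
    DI_sum t₀ t₁ Finset.univ _ (fun q _ => hcq2 q) (fun q _ => hsq2 q)
  have eRd : ∀ q : {q : ℕ × ℕ // q ∈ S}, (∫ t in t₀..t₁, ∫ x : ℝ, ((-1 : ℝ) ^ q.1.1 * α q * q.1.2) * (pdx^[q.1.1] l (x, t) * (f (x, t) ^ (q.1.2 - 1) * δf (x, t))))
      = ((-1 : ℝ) ^ q.1.1 * α q * q.1.2) * (∫ t in t₀..t₁, ∫ x : ℝ, pdx^[q.1.1] l (x, t) * (f (x, t) ^ (q.1.2 - 1) * δf (x, t))) := fun q => DI_cmul t₀ t₁ _ (fun z => pdx^[q.1.1] l z * (f z ^ (q.1.2 - 1) * δf z))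
  -- claim (ii): integration by parts in x
  have claim_ii : ∀ q : {q : ℕ × ℕ // q ∈ S},
      (∫ t in t₀..t₁, ∫ x : ℝ,
        l (x, t) * pdx^[q.1.1] (fun z => f z ^ (q.1.2 - 1) * δf z ^ 1) (x, t))
      = (-1 : ℝ) ^ q.1.1 * (∫ t in t₀..t₁, ∫ x : ℝ, pdx^[q.1.1] l (x, t) * (f (x, t) ^ (q.1.2 - 1) * δf (x, t))) := by
    intro q
    have hgq : ContDiff ℝ (⊤ : ℕ∞) (fun z : ℝ × ℝ => f z ^ (q.1.2 - 1) * δf z ^ 1) :=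
      (hf'.pow _).mul (hδf'.pow _)
    have hinner : ∀ t : ℝ,
        (∫ x : ℝ, l (x, t) * pdx^[q.1.1] (fun z => f z ^ (q.1.2 - 1) * δf z ^ 1) (x, t))
        = (-1 : ℝ) ^ q.1.1 * ∫ x : ℝ, pdx^[q.1.1] l (x, t) * (f (x, t) ^ (q.1.2 - 1) * δf (x, t)) := by
      intro t
      have h1 : ∀ x : ℝ,
          l (x, t) * pdx^[q.1.1] (fun z => f z ^ (q.1.2 - 1) * δf z ^ 1) (x, t)
          = (fun y => l (y, t)) x
            * iteratedDeriv q.1.1 (fun y => f (y, t) ^ (q.1.2 - 1) * δf (y, t) ^ 1) x := fun x => by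
        rw [iteratedDeriv_slice hgq]
      rw [integral_congr_ae (Filter.Eventually.of_forall h1)]
      rw [ibp_iter (contDiff_slice_x hl' t) (hcs_slice hlsupp t) (contDiff_slice_x hgq t)]
      congr 1
      refine integral_congr_ae (Filter.Eventually.of_forall fun x => ?_)
      show iteratedDeriv q.1.1 (fun y => l (y, t)) x
          * (f (x, t) ^ (q.1.2 - 1) * δf (x, t) ^ 1)
        = pdx^[q.1.1] l (x, t) * (f (x, t) ^ (q.1.2 - 1) * δf (x, t))
      rw [show iteratedDeriv q.1.1 (fun y => l (y, t)) x = pdx^[q.1.1] l (x, t)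
        from iteratedDeriv_slice hl' _ x t, pow_one]
    calc (∫ t in t₀..t₁, ∫ x : ℝ,
          l (x, t) * pdx^[q.1.1] (fun z => f z ^ (q.1.2 - 1) * δf z ^ 1) (x, t))
        = ∫ t in t₀..t₁, (-1 : ℝ) ^ q.1.1 * ∫ x : ℝ, pdx^[q.1.1] l (x, t) * (f (x, t) ^ (q.1.2 - 1) * δf (x, t)) :=
          intervalIntegral.integral_congr fun t _ => hinner t
      _ = (-1 : ℝ) ^ q.1.1 * (∫ t in t₀..t₁, ∫ x : ℝ, pdx^[q.1.1] l (x, t) * (f (x, t) ^ (q.1.2 - 1) * δf (x, t))) := intervalIntegral.integral_const_mul _ _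
  -- claim (i): integration by parts in t
  have claim_i : (∫ t in t₀..t₁, ∫ x : ℝ, l (x, t) * pdt δf (x, t)) = (∫ t in t₀..t₁, ∫ x : ℝ, δf (x, t) * -(pdt l (x, t))) + (∫ x : ℝ, l (x, t₁) * δf (x, t₁)) := by
    have hM : ContDiff ℝ (⊤ : ℕ∞) (fun z : ℝ × ℝ => l z * δf z) := hl'.mul hδf'
    have hMs : HasCompactSupport (fun z : ℝ × ℝ => l z * δf z) := hlsupp.mul_right
    have hpdtM_c : Continuous (pdt fun z : ℝ × ℝ => l z * δf z) := (contDiff_pdt hM).continuous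
    have hpdtM_s : HasCompactSupport (pdt fun z : ℝ × ℝ => l z * δf z) := hcs_pdt hMs
    have hFTC : (∫ t in t₀..t₁, ∫ x : ℝ, pdt (fun z : ℝ × ℝ => l z * δf z) (x, t)) = ∫ x : ℝ, l (x, t₁) * δf (x, t₁) := by
      rw [swap_helper hpdtM_c hpdtM_s ht.le]
      have hx : ∀ x : ℝ, (∫ t in t₀..t₁, pdt (fun z : ℝ × ℝ => l z * δf z) (x, t))
          = l (x, t₁) * δf (x, t₁) := by
        intro x
        rw [intervalIntegral.integral_eq_sub_of_hasDerivAt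
          (fun t _ => hasDerivAt_slice_t hM x t)
          ((hpdtM_c.comp (continuous_const.prodMk continuous_id)).intervalIntegrable _ _)]
        simp [hδf0 x]
      simp only [hx]
    have hc4 : Continuous (fun z : ℝ × ℝ => δf z * pdt l z) :=
      hδfc.mul (contDiff_pdt hl').continuous
    have hs4 : HasCompactSupport (fun z : ℝ × ℝ => δf z * pdt l z) :=
      (hcs_pdt hlsupp).mul_left
    have hsplit : (∫ t in t₀..t₁, ∫ x : ℝ,
          (l (x, t) * pdt δf (x, t) + δf (x, t) * pdt l (x, t)))
        = (∫ t in t₀..t₁, ∫ x : ℝ, l (x, t) * pdt δf (x, t)) + ∫ t in t₀..t₁, ∫ x : ℝ, δf (x, t) * pdt l (x, t) :=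
      DI_add t₀ t₁ (hlc.mul (contDiff_pdt hδf').continuous) hlsupp.mul_right hc4 hs4
    have hcongr : (∫ t in t₀..t₁, ∫ x : ℝ,
          (l (x, t) * pdt δf (x, t) + δf (x, t) * pdt l (x, t)))
        = ∫ t in t₀..t₁, ∫ x : ℝ, pdt (fun z : ℝ × ℝ => l z * δf z) (x, t) :=
      DI_congr t₀ t₁
        (F := fun z : ℝ × ℝ => l z * pdt δf z + δf z * pdt l z)
        (G := pdt fun z : ℝ × ℝ => l z * δf z)
        (fun x t => by rw [pdt_mul hl' hδf' (x, t)]; ring)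
    have hneg : (∫ t in t₀..t₁, ∫ x : ℝ, δf (x, t) * -(pdt l (x, t))) = - ∫ t in t₀..t₁, ∫ x : ℝ, δf (x, t) * pdt l (x, t) := by
      rw [DI_congr t₀ t₁ (F := fun z : ℝ × ℝ => δf z * -(pdt l z))
        (G := fun z : ℝ × ℝ => -(δf z * pdt l z)) (fun x t => by ring)]
      exact DI_neg t₀ t₁ (fun z : ℝ × ℝ => δf z * pdt l z)
    have := hsplit.symm.trans (hcongr.trans hFTC)
    rw [hneg]
    linarith
  -- evaluate the derivative of the polynomial at 0
  have hsum_eval : ∀ q : {q : ℕ × ℕ // q ∈ S},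
      (∑ k ∈ Finset.range (q.1.2 + 1),
        ((q.1.2.choose k : ℝ) * (∫ t in t₀..t₁, ∫ x : ℝ,
            l (x, t) * pdx^[q.1.1] (fun z => f z ^ k * δf z ^ (q.1.2 - k)) (x, t)))
          * ((((q.1.2 - k : ℕ)) : ℝ) * (0 : ℝ) ^ (q.1.2 - k - 1)))
      = (q.1.2 : ℝ) * ((-1 : ℝ) ^ q.1.1 * (∫ t in t₀..t₁, ∫ x : ℝ, pdx^[q.1.1] l (x, t) * (f (x, t) ^ (q.1.2 - 1) * δf (x, t)))) := by
    intro q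
    have hp1 : 1 ≤ q.1.2 := hS q.1 q.2
    rw [Finset.sum_eq_single_of_mem (q.1.2 - 1) (Finset.mem_range.mpr (by omega))]
    · have h1 : q.1.2 - (q.1.2 - 1) = 1 := by omega
      rw [h1]
      have h2 : q.1.2.choose (q.1.2 - 1) = q.1.2 := by
        have h3 := Nat.choose_symm (Nat.sub_le q.1.2 1)
        rw [h1] at h3
        rw [← h3, Nat.choose_one_right]
      rw [h2, claim_ii q]
      norm_num
    · intro k hk hkne
      rcases (by omega : q.1.2 - k = 0 ∨ 2 ≤ q.1.2 - k) with h | h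
      · rw [h]; norm_num
      · rw [zero_pow (by omega : q.1.2 - k - 1 ≠ 0)]; ring
  rw [eRa, eRb, eRc,
    show (∑ q : {q : ℕ × ℕ // q ∈ S}, ∫ t in t₀..t₁, ∫ x : ℝ, ((-1 : ℝ) ^ q.1.1 * α q * q.1.2) * (pdx^[q.1.1] l (x, t) * (f (x, t) ^ (q.1.2 - 1) * δf (x, t))))
      = ∑ q : {q : ℕ × ℕ // q ∈ S}, ((-1 : ℝ) ^ q.1.1 * α q * q.1.2) * (∫ t in t₀..t₁, ∫ x : ℝ, pdx^[q.1.1] l (x, t) * (f (x, t) ^ (q.1.2 - 1) * δf (x, t))) from Finset.sum_congr rfl fun q _ => eRd q,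
    show (∑ q : {q : ℕ × ℕ // q ∈ S}, α q * ∑ k ∈ Finset.range (q.1.2 + 1),
        ((q.1.2.choose k : ℝ) * (∫ t in t₀..t₁, ∫ x : ℝ,
            l (x, t) * pdx^[q.1.1] (fun z => f z ^ k * δf z ^ (q.1.2 - k)) (x, t)))
          * ((((q.1.2 - k : ℕ)) : ℝ) * (0 : ℝ) ^ (q.1.2 - k - 1)))
      = ∑ q : {q : ℕ × ℕ // q ∈ S}, ((-1 : ℝ) ^ q.1.1 * α q * q.1.2) * (∫ t in t₀..t₁, ∫ x : ℝ, pdx^[q.1.1] l (x, t) * (f (x, t) ^ (q.1.2 - 1) * δf (x, t)))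
      from Finset.sum_congr rfl fun q _ => by rw [hsum_eval q]; ring,
    claim_i]
  ring
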